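/- Let H be a separable infinite-dimensional Hilbert space regarded as a left Hilbert K(H)-module with inner product ⟨ξ, η⟩ = e_{ξ,η}. Let (ε_n) be an orthonormal basis of H. Then there is no subsequence (ε_{n_k}) and no vector ε_0 ∈ H such that ‖e_{ε_{n_k}, ξ} − e_{ε_0, ξ}‖ → 0 for all ξ ∈ H. In particular, H as a Hilbert K(H)-module does not satisfy condition [H]. -/

import Mathlib

open Filter Topology

/-- The rank-one operator `e_{ξ,η} : ν ↦ (ν|η)ξ` on a Hilbert space. -/
noncomputable def rankOne {H : Type*} [NormedAddCommGroup H] [InnerProductSpace ℂ H]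
    (ξ η : H) : H →L[ℂ] H :=
  (innerSL ℂ η).smulRight ξ

/-!
Testing the convergence against `ξ = ε 0` gives `‖e_{ε_{n_k}, ε 0} − e_{ε₀, ε 0}‖ = ‖ε_{n_k} − ε₀‖`,
so the subsequence would converge in norm to `ε₀`. But distinct vectors of an orthonormal family
are at distance `√2`, so no injectively reindexed orthonormal sequence is even Cauchy.
-/

theorem rankOne_eq_innerProductSpace_rankOne {H : Type*} [NormedAddCommGroup H]
    [InnerProductSpace ℂ H] (ξ η : H) : rankOne ξ η = InnerProductSpace.rankOne ℂ ξ η :=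
  rfl

theorem norm_rankOne_sub_rankOne {H : Type*} [NormedAddCommGroup H] [InnerProductSpace ℂ H]
    (ξ ζ η : H) : ‖rankOne ξ η - rankOne ζ η‖ = ‖ξ - ζ‖ * ‖η‖ := by
  simp only [rankOne_eq_innerProductSpace_rankOne, ← sub_apply, ← map_sub,
    InnerProductSpace.norm_rankOne]

namespace Orthonormal

variable {𝕜 E ι : Type*} [RCLike 𝕜] [NormedAddCommGroup E] [InnerProductSpace 𝕜 E] {v : ι → E}

theorem norm_sub_sq_of_ne (hv : Orthonormal 𝕜 v) {i j : ι} (hij : i ≠ j) :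
    ‖v i - v j‖ ^ 2 = 2 := by
  rw [@norm_sub_sq 𝕜, hv.2 hij, hv.1, hv.1]
  norm_num

theorem not_cauchySeq_comp (hv : Orthonormal 𝕜 v) {φ : ℕ → ι} (hφ : Function.Injective φ) :
    ¬ CauchySeq (v ∘ φ) := by
  intro hcauchy
  obtain ⟨N, hN⟩ := Metric.cauchySeq_iff.mp hcauchy 1 one_pos
  have hclose : ‖v (φ N) - v (φ (N + 1))‖ < 1 := by
    simpa [dist_eq_norm] using hN N le_rfl (N + 1) N.le_succ
  have hfar := hv.norm_sub_sq_of_ne (hφ.ne N.succ_ne_self.symm)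
  nlinarith [norm_nonneg (v (φ N) - v (φ (N + 1)))]

theorem not_tendsto_comp (hv : Orthonormal 𝕜 v) {φ : ℕ → ι} (hφ : Function.Injective φ)
    (x : E) : ¬ Tendsto (v ∘ φ) atTop (𝓝 x) :=
  fun h => hv.not_cauchySeq_comp hφ h.cauchySeq

end Orthonormal

theorem stmt6_general {H : Type*} [NormedAddCommGroup H] [InnerProductSpace ℂ H]
    (ε : HilbertBasis ℕ ℂ H) :
    ¬ ∃ φ : ℕ → ℕ, StrictMono φ ∧ ∃ ε₀ : H, ∀ ξ : H,
      Tendsto (fun k => ‖rankOne (ε (φ k)) ξ - rankOne ε₀ ξ‖) atTop (𝓝 0) := by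
  rintro ⟨φ, hφ, ε₀, h⟩
  have hlim : Tendsto (ε ∘ φ) atTop (𝓝 ε₀) := by
    rw [tendsto_iff_norm_sub_tendsto_zero]
    simpa [norm_rankOne_sub_rankOne, ε.orthonormal.1 0] using h (ε 0)
  exact ε.orthonormal.not_tendsto_comp hφ.injective ε₀ hlim

/-- Let `H` be a separable infinite-dimensional Hilbert space, viewed as a
left Hilbert `K(H)`-module with inner product `⟪ξ, η⟫ = e_{ξ,η}`, and let `(ε_n)` be an
orthonormal basis of `H`. Then there is no subsequence `(ε_{n_k})` and no `ε₀ ∈ H` with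
`‖e_{ε_{n_k}, ξ} − e_{ε₀, ξ}‖ → 0` for all `ξ ∈ H`; in particular `H` as a Hilbert
`K(H)`-module does not satisfy condition [H]. -/
theorem stmt6 {H : Type*} [NormedAddCommGroup H] [InnerProductSpace ℂ H] [CompleteSpace H]
    (ε : HilbertBasis ℕ ℂ H) :
    ¬ ∃ φ : ℕ → ℕ, StrictMono φ ∧ ∃ ε₀ : H, ∀ ξ : H,
      Tendsto (fun k => ‖rankOne (ε (φ k)) ξ - rankOne ε₀ ξ‖) atTop (𝓝 0) :=
  stmt6_general ε
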